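/- Let F = ⟨W,R⟩ be a finite rooted transitive frame validating Wid_1^+, and let c be the initial cluster of F (the cluster of a root). Then the restriction of F to the set of points strictly above c (c↑ minus c) decomposes as a disjoint union of subframes F_1,…,F_n such that for each i, the inverse skeleton sk(F_i)^{-1} is a finite tree. -/

import Mathlib

/-! Validity of `Wid₁⁺` at the root `w` says: if `v` sees `u₁` and `u₂` but does not see `w`, then
`u₁` and `u₂` are equal or `R`-comparable (make `q` true only at `w` and `pᵢ` only at `uᵢ`).
Hence above every point of `c↑⁻` the reflexive closure of `R` is a chain, so "having a common
successor" is an equivalence relation on `c↑⁻`. Its classes are the parts: each is closed upward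
and directed, and together with the chain property this is exactly what makes `sk⁻¹` of a part a
finite tree. -/

/-- A Kripke frame: a set of worlds with a binary relation. -/
structure Frame where
  World : Type
  rel : World → World → Prop

/-- `f` is a reduction (surjective p-morphism) of `F` to `G`. -/
def Reduction (F G : Frame) (f : F.World → G.World) : Prop :=
  Function.Surjective f ∧
  (∀ w u, F.rel w u → G.rel (f w) (f u)) ∧
  (∀ w v, G.rel (f w) v → ∃ u, F.rel w u ∧ f u = v)

/-- `F` is reducible to `G`. -/
def Reducible (F G : Frame) : Prop := ∃ f, Reduction F G f

/-- The subframe of `F` generated by the point `w`. -/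
def Frame.genSub (F : Frame) (w : F.World) : Frame :=
  ⟨{v // Relation.ReflTransGen F.rel w v}, fun a b => F.rel a.1 b.1⟩

/-- Modal formulas over countably many propositional variables. -/
inductive Formula where
  | var : ℕ → Formula
  | bot : Formula
  | imp : Formula → Formula → Formula
  | box : Formula → Formula
deriving DecidableEq

namespace Formula

def neg (a : Formula) : Formula := .imp a .bot
def top : Formula := .imp .bot .bot
def and (a b : Formula) : Formula := neg (.imp a (neg b))
def or (a b : Formula) : Formula := .imp (neg a) b
def dia (a : Formula) : Formula := neg (.box (neg a))

/-- Finite conjunction of a list of formulas. -/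
def bigConj (l : List Formula) : Formula := l.foldr and top

/-- Finite disjunction of a list of formulas. -/
def bigDisj (l : List Formula) : Formula := l.foldr or .bot

end Formula

/-- Kripke satisfaction of a formula at a world of `F` under valuation `V`. -/
def Sat (F : Frame) (V : ℕ → F.World → Prop) : F.World → Formula → Prop
  | w, .var n => V n w
  | _, .bot => False
  | w, .imp a b => Sat F V w a → Sat F V w b
  | w, .box a => ∀ u, F.rel w u → Sat F V u a

/-- `φ` is valid at the point `w` of `F` (true under all valuations). -/
def SatAll (F : Frame) (w : F.World) (φ : Formula) : Prop := ∀ V, Sat F V w φ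

/-- `φ` is valid in the frame `F`. -/
def Valid (F : Frame) (φ : Formula) : Prop := ∀ V w, Sat F V w φ

/-- The weak width formula `Wid_n^+`, with `q` encoded as variable `0` and
`p_i` as variable `i+1`:
`q ∧ ◇(□¬q ∧ ⋀_{i≤n} ◇p_i) → ⋁_{0 ≤ i ≠ j ≤ n} ◇(p_i ∧ (p_j ∨ ◇p_j))`. -/
def widPlus (n : ℕ) : Formula :=
  .imp
    (.and (.var 0)
      (Formula.dia (.and (.box (Formula.neg (.var 0)))
        (Formula.bigConj ((List.finRange (n + 1)).map fun i => Formula.dia (.var (i + 1)))))))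
    (Formula.bigDisj ((List.finRange (n + 1)).flatMap fun i =>
      (List.finRange (n + 1)).flatMap fun j =>
        if i = j then []
        else [Formula.dia (.and (.var (i + 1))
          (.or (.var (j + 1)) (Formula.dia (.var (j + 1)))))]))

/-- The restriction of a frame to a subset of its worlds. -/
def Frame.restrict (F : Frame) (X : Set F.World) : Frame :=
  ⟨{x // x ∈ X}, fun a b => F.rel a.1 b.1⟩

/-- Cluster equivalence: `w ∼ u` iff `w = u` or `R w u ∧ R u w`. -/
def clEq (F : Frame) (w u : F.World) : Prop :=
  w = u ∨ (F.rel w u ∧ F.rel u w)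

/-- `w ≤ u` in the inverse of the reflexive closure of the skeleton order:
`w`'s cluster is `≥` `u`'s cluster in the original order. -/
def leInv (F : Frame) (w u : F.World) : Prop := clEq F w u ∨ F.rel u w

/-- The inverse skeleton `sk(F)⁻¹` of `F` is a finite tree: the frame is
finite, and the induced order on clusters is downward connected and has no
downward branching (it is automatically a partial order on clusters). -/
def SkInvTree (F : Frame) : Prop :=
  Finite F.World ∧
  (∀ m m' : F.World, ∃ w, leInv F w m ∧ leInv F w m') ∧
  (∀ m w w' : F.World, leInv F w m → leInv F w' m → (leInv F w w' ∨ leInv F w' w))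

open Relation Function

section Partition

variable {α : Type*}

theorem Set.Finite.exists_fin_partition_of_equivalence {s : Set α} (hs : s.Finite)
    {ρ : α → α → Prop} (hρ : Equivalence fun a b : s => ρ a b) :
    ∃ (n : ℕ) (P : Fin n → Set α), (∀ i, (P i).Nonempty) ∧ Pairwise (Disjoint on P) ∧
      ⋃ i, P i = s ∧ ∀ i, ∀ a ∈ P i, ∀ b ∈ s, (b ∈ P i ↔ ρ a b) := by
  have := hs.to_subtype
  let σ : Setoid s := ⟨_, hρ⟩
  obtain ⟨n, ⟨e⟩⟩ := Finite.exists_equiv_fin (Quotient σ)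
  let cl : s → Fin n := fun a => e ⟦a⟧
  refine ⟨n, fun i => Subtype.val '' (cl ⁻¹' {i}), fun i => ?_, fun i j hij => ?_, ?_, ?_⟩
  · obtain ⟨a, ha⟩ := Quotient.exists_rep (e.symm i)
    exact ⟨a, a, by simp [cl, ha], rfl⟩
  · exact (Set.disjoint_image_iff Subtype.val_injective).2
      ((Set.disjoint_singleton.2 hij).preimage cl)
  · ext x
    simp
  · rintro i _ ⟨a, rfl, rfl⟩ b hb
    simp only [Set.mem_image, Set.mem_preimage, Set.mem_singleton_iff, cl]
    constructor
    · rintro ⟨b, hab, rfl⟩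
      exact hρ.symm (Quotient.exact (e.injective hab))
    · exact fun hab => ⟨⟨b, hb⟩, congrArg e (Quotient.sound (hρ.symm hab)), rfl⟩

variable {r : α → α → Prop} [IsPreorder α r] {s : Set α}

theorem equivalence_join_of_isChain (hchain : ∀ v ∈ s, IsChain r {u | r v u}) :
    Equivalence fun a b : s => Join r a b where
  refl a := ⟨a, refl_of r a.1, refl_of r a.1⟩
  symm := fun ⟨c, hac, hbc⟩ => ⟨c, hbc, hac⟩
  trans {_ b _} := fun ⟨x, hax, hbx⟩ ⟨y, hby, hcy⟩ =>
    ((hchain b b.2).total hbx hby).elim (fun hxy => ⟨y, _root_.trans hax hxy, hcy⟩)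
      (fun hyx => ⟨x, hax, _root_.trans hcy hyx⟩)

theorem Set.Finite.exists_fin_partition_directedOn (hs : s.Finite)
    (hup : ∀ ⦃a b⦄, r a b → a ∈ s → b ∈ s) (hchain : ∀ v ∈ s, IsChain r {u | r v u}) :
    ∃ (n : ℕ) (P : Fin n → Set α), (∀ i, (P i).Nonempty) ∧ Pairwise (Disjoint on P) ∧
      ⋃ i, P i = s ∧ (∀ i ⦃a b⦄, r a b → a ∈ P i → b ∈ P i) ∧ ∀ i, DirectedOn r (P i) := by
  obtain ⟨n, P, hne, hdisj, hunion, hclass⟩ :=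
    hs.exists_fin_partition_of_equivalence (equivalence_join_of_isChain hchain)
  have hsub : ∀ i, P i ⊆ s := fun i => hunion ▸ Set.subset_iUnion P i
  have hup' : ∀ i ⦃a b⦄, r a b → a ∈ P i → b ∈ P i := fun i a b hab ha =>
    (hclass i a ha b (hup hab (hsub i ha))).2 ⟨b, hab, refl b⟩
  refine ⟨n, P, hne, hdisj, hunion, hup', fun i a ha b hb => ?_⟩
  obtain ⟨u, hau, hbu⟩ := (hclass i a ha b (hsub i hb)).1 hb
  exact ⟨u, hup' i hau ha, hau, hbu⟩

end Partition

@[simp] lemma sat_and {F : Frame} {V : ℕ → F.World → Prop} {x : F.World} {a b : Formula} :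
    Sat F V x (.and a b) ↔ Sat F V x a ∧ Sat F V x b := by
  simp only [Formula.and, Formula.neg, Sat]; tauto

@[simp] lemma sat_or {F : Frame} {V : ℕ → F.World → Prop} {x : F.World} {a b : Formula} :
    Sat F V x (.or a b) ↔ Sat F V x a ∨ Sat F V x b := by
  simp only [Formula.or, Formula.neg, Sat]; tauto

@[simp] lemma sat_dia {F : Frame} {V : ℕ → F.World → Prop} {x : F.World} {a : Formula} :
    Sat F V x (.dia a) ↔ ∃ y, F.rel x y ∧ Sat F V y a := by
  simp [Formula.dia, Formula.neg, Sat]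

lemma widPlus_one_eq : widPlus 1 = .imp
    (.and (.var 0) (Formula.dia (.and (.box (Formula.neg (.var 0)))
      (.and (Formula.dia (.var 1)) (.and (Formula.dia (.var 2)) Formula.top)))))
    (.or (Formula.dia (.and (.var 1) (.or (.var 2) (Formula.dia (.var 2)))))
      (.or (Formula.dia (.and (.var 2) (.or (.var 1) (Formula.dia (.var 1))))) .bot)) := by
  decide

theorem eq_or_rel_or_rel_of_valid_widPlus_one {F : Frame} (hw : Valid F (widPlus 1))
    {w v u₁ u₂ : F.World} (hwv : F.rel w v) (hvw : ¬ F.rel v w)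
    (h₁ : F.rel v u₁) (h₂ : F.rel v u₂) : u₁ = u₂ ∨ F.rel u₁ u₂ ∨ F.rel u₂ u₁ := by
  let V : ℕ → F.World → Prop
    | 0, x => x = w
    | 1, x => x = u₁
    | _, x => x = u₂
  have H := hw V w
  simp only [widPlus_one_eq, Formula.neg, Formula.top, Sat, sat_and, sat_dia, imp_false,
    exists_eq_right, true_and, sat_or, ↓existsAndEq, or_false,
    forall_exists_index, and_imp, not_false_eq_true, forall_const, V] at H
  rcases H v hwv (fun u hvu hu => hvw (hu ▸ hvu)) h₁ h₂ with ⟨-, h | h⟩ | ⟨-, h | h⟩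
  exacts [Or.inl h, Or.inr (Or.inl h), Or.inl h.symm, Or.inr (Or.inr h)]

theorem isChain_reflGen_of_valid_widPlus_one {F : Frame} (hw : Valid F (widPlus 1))
    {w v : F.World} (hwv : F.rel w v) (hvw : ¬ F.rel v w) :
    IsChain (ReflGen F.rel) {u | ReflGen F.rel v u} := by
  rintro a (_ | ha) b (_ | hb) hab
  · exact absurd rfl hab
  · exact Or.inl (.single hb)
  · exact Or.inr (.single ha)
  · rcases eq_or_rel_or_rel_of_valid_widPlus_one hw hwv hvw ha hb with h | h | h
    exacts [absurd h hab, Or.inl (.single h), Or.inr (.single h)]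

lemma leInv_restrict_iff {F : Frame} {X : Set F.World} {a b : (F.restrict X).World} :
    leInv (F.restrict X) a b ↔ ReflGen F.rel b.1 a.1 := by
  obtain ⟨a, ha⟩ := a
  obtain ⟨b, hb⟩ := b
  simp only [leInv, clEq, reflGen_iff, Frame.restrict, Subtype.mk.injEq]
  tauto

lemma skInvTree_restrict {F : Frame} {X : Set F.World} (hX : X.Finite)
    (hdir : DirectedOn (ReflGen F.rel) X)
    (hchain : ∀ v ∈ X, IsChain (ReflGen F.rel) {u | ReflGen F.rel v u}) :
    SkInvTree (F.restrict X) := by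
  refine ⟨hX.to_subtype, fun m m' => ?_, fun m a b ha hb => ?_⟩
  · obtain ⟨u, hu, hmu, hm'u⟩ := hdir m.1 m.2 m'.1 m'.2
    exact ⟨⟨u, hu⟩, leInv_restrict_iff.2 hmu, leInv_restrict_iff.2 hm'u⟩
  · simp only [leInv_restrict_iff] at ha hb ⊢
    exact ((hchain m.1 m.2).total ha hb).symm

lemma strictUpset_cluster_eq_of_root {F : Frame} {w : F.World}
    (hroot : ∀ u, u = w ∨ F.rel w u) :
    {v | v ∉ {u | clEq F w u} ∧ ∃ x ∈ {u | clEq F w u}, F.rel x v} =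
      {v | F.rel w v ∧ ¬ F.rel v w} := by
  ext v
  simp only [clEq, Set.mem_ofPred_eq]
  rcases hroot v with rfl | hwv
  · exact iff_of_false (fun h => h.1 (Or.inl rfl)) (fun h => h.2 h.1)
  · constructor
    · exact fun h => ⟨hwv, fun hvw => h.1 (Or.inr ⟨hwv, hvw⟩)⟩
    · rintro ⟨-, hvw⟩
      refine ⟨?_, w, Or.inl rfl, hwv⟩
      rintro (rfl | ⟨-, h⟩)
      exacts [hvw hwv, hvw h]

lemma strictUpset_of_reflGen {F : Frame} (htr : ∀ a b c, F.rel a b → F.rel b c → F.rel a c)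
    {w a b : F.World} (hwa : F.rel w a) (haw : ¬ F.rel a w) (hab : ReflGen F.rel a b) :
    F.rel w b ∧ ¬ F.rel b w := by
  rcases hab with _ | hab
  · exact ⟨hwa, haw⟩
  · exact ⟨htr _ _ _ hwa hab, fun hbw => haw (htr _ _ _ hab hbw)⟩

/-- Let `F` be a finite rooted transitive frame validating `Wid₁⁺`, with root
`w` and initial cluster `c` (the cluster of `w`). Then the set `c↑⁻` of points
strictly above `c` decomposes as a disjoint union of nonempty subframes (with
no relations between distinct parts, each part closed under successors within
`c↑⁻`), each of whose inverse skeletons is a finite tree. -/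
theorem initial_cluster_decomposition (F : Frame)
    (hfin : Finite F.World)
    (htr : ∀ a b c, F.rel a b → F.rel b c → F.rel a c)
    (w : F.World) (hroot : ∀ u, u = w ∨ F.rel w u)
    (hw : Valid F (widPlus 1)) :
    ∃ (n : ℕ) (P : Fin n → Set F.World),
      (∀ i, (P i).Nonempty) ∧
      (∀ i j, i ≠ j → Disjoint (P i) (P j)) ∧
      (⋃ i, P i) = {v | v ∉ {u | clEq F w u} ∧ ∃ x ∈ {u | clEq F w u}, F.rel x v} ∧
      (∀ i j, i ≠ j → ∀ a ∈ P i, ∀ b ∈ P j, ¬ F.rel a b) ∧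
      (∀ i, ∀ a ∈ P i, ∀ b, F.rel a b → b ∈ {u | clEq F w u} ∨ b ∈ P i) ∧
      (∀ i, SkInvTree (F.restrict (P i))) := by
  have : IsTrans F.World F.rel := ⟨htr⟩
  have := hfin
  rw [strictUpset_cluster_eq_of_root hroot]
  obtain ⟨n, P, hne, hdisj, hunion, hup, hdir⟩ :=
    (Set.toFinite {v | F.rel w v ∧ ¬ F.rel v w}).exists_fin_partition_directedOn
      (fun a b hab ha => strictUpset_of_reflGen htr ha.1 ha.2 hab)
      (fun v hv => isChain_reflGen_of_valid_widPlus_one hw hv.1 hv.2)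
  have hsub : ∀ i, P i ⊆ {v | F.rel w v ∧ ¬ F.rel v w} :=
    fun i => hunion ▸ Set.subset_iUnion P i
  refine ⟨n, P, hne, hdisj, hunion, fun i j hij a ha b hb hab => ?_,
    fun i a ha b hab => Or.inr (hup i (.single hab) ha), fun i => ?_⟩
  · exact Set.disjoint_left.1 (hdisj hij) (hup i (.single hab) ha) hb
  · exact skInvTree_restrict (Set.toFinite _) (hdir i)
      fun v hv => isChain_reflGen_of_valid_widPlus_one hw (hsub i hv).1 (hsub i hv).2
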